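/- Let β : ℤ → ℂ be finitely supported and let h : (0,∞) → ℂ be measurable with ∫₀^∞ |h(ρ)| ρ dρ < ∞. Define the divergence free polar mother wavelet in the frequency domain by ψ̂(ξ) = −i (Σ_m β_m e^{i m θ_ξ}) h(|ξ|) e_θ(ξ), where e_θ(ξ) = (sin θ_ξ, −cos θ_ξ). Then its unitary inverse Fourier transform ψ(x) = (2π)^{−1} ∫_{ℝ²} ψ̂(ξ) e^{i⟨ξ,x⟩} dξ has, for every x ∈ ℝ² \ {0} with polar coordinates (|x|, θ_x), the closed form ψ(x) = (1/2) Σ_{σ ∈ {−1,+1}} Σ_m i^{m+σ} β_m e^{i(m+σ)θ_x} h_{m+σ}(|x|) · (−σ, i), where h_k(r) = ∫₀^∞ h(ρ) J_k(ρ r) ρ dρ and J_k(z) = (1/2π) ∫₀^{2π} e^{i(z sin φ − k φ)} dφ. -/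

import Mathlib

open MeasureTheory RealInnerProductSpace

/-- The Bessel function of the first kind of integer order `k`. -/
noncomputable def besselJ (k : ℤ) (z : ℝ) : ℂ :=
  (2 * Real.pi)⁻¹ • ∫ φ in (0 : ℝ)..(2 * Real.pi),
    Complex.exp (Complex.I * ((z * Real.sin φ - k * φ : ℝ) : ℂ))

/-- The order-`k` Hankel transform `h_k(r) = ∫₀^∞ h(ρ) J_k(ρr) ρ dρ` of a radial window. -/
noncomputable def hankel (h : ℝ → ℂ) (k : ℤ) (r : ℝ) : ℂ :=
  ∫ ρ in Set.Ioi (0 : ℝ), h ρ * besselJ k (ρ * r) * (ρ : ℂ)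

/-- The polar angle of a point in the plane. -/
noncomputable def polarAngle (v : EuclideanSpace ℝ (Fin 2)) : ℝ :=
  Complex.arg ((v 0 : ℂ) + (v 1 : ℂ) * Complex.I)

/-
Writing `e_θ = (sin θ, -cos θ)` through `e^{±iθ}`, the field `ψ̂` becomes a finite combination of
polar harmonics `e^{ikθ_ξ} h(|ξ|)` with `k = m ± 1`. In polar coordinates `ξ = ρ e^{iφ}` the
Fourier integral of such a harmonic factors: the angular integral
`∫ e^{i(ρ|x| cos(φ - θ_x) + kφ)} dφ` equals `2π i^k e^{ikθ_x} J_k(ρ|x|)` by the substitution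
`φ = θ_x + π/2 - ψ` and `2π`-periodicity, and the remaining radial integral is the Hankel
transform `h_k(|x|)`. Fubini applies because the integrand has modulus `ρ |h(ρ)|`.
-/

open Complex
open scoped Real

section PolarCoord

variable {E : Type*} [NormedAddCommGroup E] [NormedSpace ℝ E]

theorem integrable_iff_integrableOn_polarCoord_symm (f : ℝ × ℝ → E) :
    Integrable f ↔ IntegrableOn (fun p ↦ p.1 • f (polarCoord.symm p)) polarCoord.target := by
  rw [← integrableOn_univ, ← integrableOn_congr_set_ae polarCoord_source_ae_eq_univ,
    ← polarCoord.symm_image_target_eq_source,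
    integrableOn_image_iff_integrableOn_abs_det_fderiv_smul volume
      polarCoord.open_target.measurableSet
      (fun p _ ↦ (hasFDerivAt_polarCoord_symm p).hasFDerivWithinAt) polarCoord.symm.injOn]
  refine integrableOn_congr_fun (fun p hp ↦ ?_) polarCoord.open_target.measurableSet
  rw [det_fderivPolarCoordSymm, abs_of_pos hp.1]

theorem Complex.integrable_iff_integrableOn_polarCoord_symm (f : ℂ → E) :
    Integrable f ↔
      IntegrableOn (fun p ↦ p.1 • f (Complex.polarCoord.symm p)) polarCoord.target := by
  rw [← (volume_preserving_equiv_real_prod.symm).integrable_comp_emb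
    measurableEquivRealProd.symm.measurableEmbedding,
    _root_.integrable_iff_integrableOn_polarCoord_symm]
  rfl

end PolarCoord

section RadialWindow

variable {h : ℝ → ℂ}

theorem inner_polarCoord_symm (p : ℝ × ℝ) (w : ℂ) :
    ⟪Complex.polarCoord.symm p, w⟫ = p.1 * ‖w‖ * Real.cos (p.2 - arg w) := by
  simp only [Complex.inner, Complex.polarCoord_symm_apply, mul_re, conj_re, conj_im, add_re,
    add_im, mul_im, ofReal_re, ofReal_im, I_re, I_im]
  rw [Real.cos_sub, ← norm_mul_cos_arg w, ← norm_mul_sin_arg w]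
  ring

theorem integrableOn_polarCoord_target_mul_exp_I_mul (hmeas : Measurable h)
    (hint : IntegrableOn (fun ρ ↦ ‖h ρ‖ * ρ) (Set.Ioi 0)) {Φ : ℝ × ℝ → ℝ} (hΦ : Measurable Φ) :
    IntegrableOn (fun p : ℝ × ℝ ↦ p.1 * h p.1 * exp (I * Φ p)) polarCoord.target := by
  have hbound : IntegrableOn (fun p : ℝ × ℝ ↦ ‖h p.1‖ * p.1) polarCoord.target := by
    have hconst : IntegrableOn (fun _ : ℝ ↦ (1 : ℝ)) (Set.Ioo (-π) π) :=
      integrableOn_const measure_Ioo_lt_top.ne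
    rw [polarCoord_target, IntegrableOn, Measure.volume_eq_prod, ← Measure.prod_restrict]
    simpa using hint.mul_prod hconst
  refine hbound.mono' (by fun_prop) ?_
  filter_upwards [ae_restrict_mem polarCoord.open_target.measurableSet] with p hp
  rw [norm_mul, norm_mul, norm_exp_I_mul_ofReal, norm_real, Real.norm_of_nonneg hp.1.le]
  linarith

theorem besselJ_eq_integral_add_two_pi (k : ℤ) (z t : ℝ) :
    besselJ k z = (2 * π)⁻¹ • ∫ φ in t..t + 2 * π,
      exp (I * ((z * Real.sin φ - k * φ : ℝ) : ℂ)) := by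
  have hper : Function.Periodic (fun φ : ℝ ↦ exp (I * ((z * Real.sin φ - k * φ : ℝ) : ℂ)))
      (2 * π) := by
    intro φ
    simp only [Real.sin_add_two_pi]
    rw [← mul_one (exp _), ← exp_int_mul_two_pi_mul_I k, ← exp_add]
    congr 1
    push_cast
    ring
  rw [besselJ, hper.intervalIntegral_add_eq t 0, zero_add]

theorem I_zpow_eq_exp (k : ℤ) : I ^ k = exp (I * k * (π / 2 : ℝ)) := by
  conv_lhs => rw [← exp_pi_div_two_mul_I, ← exp_int_mul]
  push_cast
  ring_nf

theorem integral_exp_I_mul_cos_sub_add (k : ℤ) (z θ : ℝ) :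
    ∫ φ in Set.Ioo (-π) π, exp (I * ((z * Real.cos (φ - θ) + k * φ : ℝ) : ℂ))
      = 2 * π * (I ^ k * exp (I * k * θ) * besselJ k z) := by
  -- the substitution `φ = θ + π / 2 - ψ` turns `z cos (φ - θ)` into `z sin ψ`
  have hsubst : ∀ φ : ℝ, exp (I * ((z * Real.cos (φ - θ) + k * φ : ℝ) : ℂ))
      = I ^ k * exp (I * k * θ) *
          exp (I * ((z * Real.sin (θ + π / 2 - φ) - k * (θ + π / 2 - φ) : ℝ) : ℂ)) := by
    intro φ
    rw [show θ + π / 2 - φ = π / 2 - (φ - θ) by ring, Real.sin_pi_div_two_sub, I_zpow_eq_exp,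
      ← exp_add, ← exp_add]
    congr 1
    push_cast
    ring
  have hπ : (2 * π : ℂ) ≠ 0 := by exact_mod_cast Real.two_pi_pos.ne'
  rw [← integral_Ioc_eq_integral_Ioo, ← intervalIntegral.integral_of_le (by linarith [Real.pi_pos]),
    funext hsubst, intervalIntegral.integral_const_mul,
    intervalIntegral.integral_comp_sub_left
      (fun ψ : ℝ ↦ exp (I * ((z * Real.sin ψ - k * ψ : ℝ) : ℂ))),
    besselJ_eq_integral_add_two_pi k z (θ + π / 2 - π), Complex.real_smul]
  push_cast
  field_simp
  ring_nf

theorem polarCoord_symm_smul_exp_inner_mul_exp_arg_mul (k : ℤ) (w : ℂ) {p : ℝ × ℝ}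
    (hp : p ∈ polarCoord.target) :
    p.1 • (exp (I * ⟪Complex.polarCoord.symm p, w⟫) *
        exp (I * k * arg (Complex.polarCoord.symm p)) * h ‖Complex.polarCoord.symm p‖)
      = p.1 * h p.1 * exp (I * ((p.1 * ‖w‖ * Real.cos (p.2 - arg w) + k * p.2 : ℝ) : ℂ)) := by
  have hpolar := Complex.polarCoord.right_inv hp
  rw [Complex.polarCoord_apply] at hpolar
  have hnorm : ‖Complex.polarCoord.symm p‖ = p.1 := congrArg Prod.fst hpolar
  have harg : arg (Complex.polarCoord.symm p) = p.2 := congrArg Prod.snd hpolar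
  rw [hnorm, harg, inner_polarCoord_symm, real_smul, ofReal_add, mul_add, exp_add]
  push_cast
  ring_nf

theorem integrable_exp_inner_mul_exp_arg_mul (hmeas : Measurable h)
    (hint : IntegrableOn (fun ρ ↦ ‖h ρ‖ * ρ) (Set.Ioi 0)) (k : ℤ) (w : ℂ) :
    Integrable (fun z : ℂ ↦ exp (I * ⟪z, w⟫) * exp (I * k * arg z) * h ‖z‖) := by
  rw [Complex.integrable_iff_integrableOn_polarCoord_symm]
  refine (integrableOn_polarCoord_target_mul_exp_I_mul hmeas hint (by fun_prop)).congr_fun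
    (fun p hp ↦ (polarCoord_symm_smul_exp_inner_mul_exp_arg_mul k w hp).symm)
    polarCoord.open_target.measurableSet

theorem integral_exp_inner_mul_exp_arg_mul (hmeas : Measurable h)
    (hint : IntegrableOn (fun ρ ↦ ‖h ρ‖ * ρ) (Set.Ioi 0)) (k : ℤ) (w : ℂ) :
    ∫ z : ℂ, exp (I * ⟪z, w⟫) * exp (I * k * arg z) * h ‖z‖
      = 2 * π * (I ^ k * exp (I * k * arg w) * hankel h k ‖w‖) := by
  have hprod := integrableOn_polarCoord_target_mul_exp_I_mul hmeas hint
    (Φ := fun p ↦ p.1 * ‖w‖ * Real.cos (p.2 - arg w) + k * p.2) (by fun_prop)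
  rw [polarCoord_target, IntegrableOn, Measure.volume_eq_prod] at hprod
  calc ∫ z : ℂ, exp (I * ⟪z, w⟫) * exp (I * k * arg z) * h ‖z‖
      = ∫ ρ in Set.Ioi 0, ∫ φ in Set.Ioo (-π) π,
          ρ * h ρ * exp (I * ((ρ * ‖w‖ * Real.cos (φ - arg w) + k * φ : ℝ) : ℂ)) := by
        rw [← Complex.integral_comp_polarCoord_symm,
          setIntegral_congr_fun polarCoord.open_target.measurableSet
            (fun p hp ↦ polarCoord_symm_smul_exp_inner_mul_exp_arg_mul k w hp),
          polarCoord_target, Measure.volume_eq_prod, setIntegral_prod _ hprod]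
    _ = ∫ ρ in Set.Ioi 0, 2 * π * (I ^ k * exp (I * k * arg w)) *
          (h ρ * besselJ k (ρ * ‖w‖) * ρ) := by
        refine setIntegral_congr_fun measurableSet_Ioi fun ρ _ ↦ ?_
        simp only [integral_const_mul, integral_exp_I_mul_cos_sub_add]
        ring
    _ = 2 * π * (I ^ k * exp (I * k * arg w) * hankel h k ‖w‖) := by
        rw [integral_const_mul, hankel]
        ring

theorem polarAngle_eq_arg (v : EuclideanSpace ℝ (Fin 2)) :
    polarAngle v = arg (orthonormalBasisOneI.repr.symm v) := rfl

theorem exp_inner_mul_exp_polarAngle_mul_eq_comp (k : ℤ) (x : EuclideanSpace ℝ (Fin 2)) :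
    (fun ξ : EuclideanSpace ℝ (Fin 2) ↦ exp (I * ⟪ξ, x⟫) * exp (I * k * polarAngle ξ) * h ‖ξ‖)
      = (fun z : ℂ ↦ exp (I * ⟪z, orthonormalBasisOneI.repr.symm x⟫) * exp (I * k * arg z) *
          h ‖z‖) ∘ orthonormalBasisOneI.repr.symm := by
  funext ξ
  rw [Function.comp_apply, LinearIsometryEquiv.inner_map_map, LinearIsometryEquiv.norm_map]
  rfl

theorem integrable_exp_inner_mul_exp_polarAngle_mul (hmeas : Measurable h)
    (hint : IntegrableOn (fun ρ ↦ ‖h ρ‖ * ρ) (Set.Ioi 0)) (k : ℤ) (x : EuclideanSpace ℝ (Fin 2)) :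
    Integrable (fun ξ : EuclideanSpace ℝ (Fin 2) ↦
      exp (I * ⟪ξ, x⟫) * exp (I * k * polarAngle ξ) * h ‖ξ‖) := by
  rw [exp_inner_mul_exp_polarAngle_mul_eq_comp, orthonormalBasisOneI.repr.symm.measurePreserving
    |>.integrable_comp_emb orthonormalBasisOneI.repr.symm.toHomeomorph.measurableEmbedding]
  exact integrable_exp_inner_mul_exp_arg_mul hmeas hint k _

theorem integral_exp_inner_mul_exp_polarAngle_mul (hmeas : Measurable h)
    (hint : IntegrableOn (fun ρ ↦ ‖h ρ‖ * ρ) (Set.Ioi 0)) (k : ℤ) (x : EuclideanSpace ℝ (Fin 2)) :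
    ∫ ξ : EuclideanSpace ℝ (Fin 2), exp (I * ⟪ξ, x⟫) * exp (I * k * polarAngle ξ) * h ‖ξ‖
      = 2 * π * (I ^ k * exp (I * k * polarAngle x) * hankel h k ‖x‖) := by
  rw [exp_inner_mul_exp_polarAngle_mul_eq_comp, polarAngle_eq_arg,
    ← orthonormalBasisOneI.repr.symm.norm_map x, ← integral_exp_inner_mul_exp_arg_mul hmeas hint k,
    Function.comp_def]
  exact orthonormalBasisOneI.repr.symm.measurePreserving.integral_comp
    orthonormalBasisOneI.repr.symm.toHomeomorph.measurableEmbedding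
    fun z ↦ exp (I * ⟪z, _⟫) * exp (I * k * arg z) * h ‖z‖

end RadialWindow

theorem neg_I_mul_exp_smul_sin_neg_cos (m : ℤ) (θ : ℝ) :
    (-I * exp (I * m * θ)) • ![((Real.sin θ : ℝ) : ℂ), ((-Real.cos θ : ℝ) : ℂ)]
      = ∑ σ ∈ ({-1, 1} : Finset ℤ),
          ((1 / 2 : ℂ) * exp (I * ((m + σ : ℤ) : ℂ) * θ)) • ![(-(σ : ℤ) : ℂ), I] := by
  have hplus : exp (I * ((m + 1 : ℤ) : ℂ) * θ) = exp (I * m * θ) * (cos θ + sin θ * I) := by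
    rw [← exp_mul_I, ← exp_add]
    push_cast
    ring_nf
  have hminus : exp (I * ((m + -1 : ℤ) : ℂ) * θ) = exp (I * m * θ) * (cos θ - sin θ * I) := by
    rw [show cos θ - sin θ * I = exp (-θ * I) by rw [exp_mul_I, cos_neg, sin_neg]; ring,
      ← exp_add]
    push_cast
    ring_nf
  rw [Finset.sum_pair (by decide), hplus, hminus]
  ext i
  fin_cases i <;>
  · simp
    ring

theorem smul_neg_I_mul_sum_mul_smul_sin_neg_cos (s : Finset ℤ) (β : ℤ → ℂ) (c d : ℂ) (θ : ℝ) :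
    c • ((-I * ∑ m ∈ s, β m * exp (I * m * θ)) * d) •
        ![((Real.sin θ : ℝ) : ℂ), ((-Real.cos θ : ℝ) : ℂ)]
      = ∑ σ ∈ ({-1, 1} : Finset ℤ), ∑ m ∈ s,
          (β m / 2 * (c * exp (I * ((m + σ : ℤ) : ℂ) * θ) * d)) • ![(-(σ : ℤ) : ℂ), I] := by
  rw [smul_smul, Finset.mul_sum, Finset.sum_mul, Finset.mul_sum, Finset.sum_smul, Finset.sum_comm]
  refine Finset.sum_congr rfl fun m _ ↦ ?_
  rw [show c * (-I * (β m * exp (I * m * θ)) * d) = (β m * c * d) * (-I * exp (I * m * θ)) by ring,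
    ← smul_smul, neg_I_mul_exp_smul_sin_neg_cos, Finset.smul_sum]
  refine Finset.sum_congr rfl fun σ _ ↦ ?_
  rw [smul_smul]
  ring_nf

theorem stmt_11_general (β : ℤ →₀ ℂ) (h : ℝ → ℂ) (hmeas : Measurable h)
    (hint : IntegrableOn (fun ρ : ℝ => ‖h ρ‖ * ρ) (Set.Ioi (0 : ℝ)))
    (ψhat : EuclideanSpace ℝ (Fin 2) → Fin 2 → ℂ)
    (hψhat : ∀ ξ, ψhat ξ =
      ((-Complex.I) *
          (∑ m ∈ β.support, β m * Complex.exp (Complex.I * (m : ℂ) * ((polarAngle ξ : ℝ) : ℂ))) *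
          h ‖ξ‖) •
        ![((Real.sin (polarAngle ξ) : ℝ) : ℂ), ((-Real.cos (polarAngle ξ) : ℝ) : ℂ)])
    (x : EuclideanSpace ℝ (Fin 2)) :
    (2 * Real.pi)⁻¹ • ∫ ξ : EuclideanSpace ℝ (Fin 2),
        Complex.exp (Complex.I * ((⟪ξ, x⟫ : ℝ) : ℂ)) • ψhat ξ
      = (1 / 2 : ℂ) • ∑ σ ∈ ({-1, 1} : Finset ℤ), ∑ m ∈ β.support,
          (Complex.I ^ (m + σ) * β m *
              Complex.exp (Complex.I * ((m + σ : ℤ) : ℂ) * ((polarAngle x : ℝ) : ℂ)) *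
              hankel h (m + σ) ‖x‖) •
            ![(-(σ : ℤ) : ℂ), Complex.I] := by
  have hterm : ∀ σ m : ℤ, Integrable fun ξ : EuclideanSpace ℝ (Fin 2) ↦
      (β m / 2 * (exp (I * ⟪ξ, x⟫) * exp (I * ((m + σ : ℤ) : ℂ) * polarAngle ξ) * h ‖ξ‖)) •
        ![(-(σ : ℤ) : ℂ), I] := fun σ m ↦
    ((integrable_exp_inner_mul_exp_polarAngle_mul hmeas hint _ x).const_mul _).smul_const _
  simp_rw [hψhat, smul_neg_I_mul_sum_mul_smul_sin_neg_cos]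
  rw [integral_finsetSum _ fun σ _ ↦ integrable_finsetSum _ fun m _ ↦ hterm σ m]
  simp_rw [integral_finsetSum _ fun m _ ↦ hterm _ m, integral_smul_const, integral_const_mul,
    integral_exp_inner_mul_exp_polarAngle_mul hmeas hint, Finset.smul_sum, ← smul_assoc]
  refine Finset.sum_congr rfl fun σ _ ↦ Finset.sum_congr rfl fun m _ ↦ ?_
  have hπ : (π : ℂ) ≠ 0 := ofReal_ne_zero.mpr Real.pi_ne_zero
  rw [smul_eq_mul, real_smul]
  push_cast
  field_simp

/-- Closed form of the spatial representation of the divergence free polar mother wavelet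
`ψ̂(ξ) = -i (∑_m β_m e^{imθ_ξ}) h(|ξ|) e_θ(ξ)` with `e_θ(ξ) = (sin θ_ξ, -cos θ_ξ)`. -/
theorem stmt_11 (β : ℤ →₀ ℂ) (h : ℝ → ℂ) (hmeas : Measurable h)
    (hint : IntegrableOn (fun ρ : ℝ => ‖h ρ‖ * ρ) (Set.Ioi (0 : ℝ)))
    (ψhat : EuclideanSpace ℝ (Fin 2) → Fin 2 → ℂ)
    (hψhat : ∀ ξ, ψhat ξ =
      ((-Complex.I) *
          (∑ m ∈ β.support, β m * Complex.exp (Complex.I * (m : ℂ) * ((polarAngle ξ : ℝ) : ℂ))) *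
          h ‖ξ‖) •
        ![((Real.sin (polarAngle ξ) : ℝ) : ℂ), ((-Real.cos (polarAngle ξ) : ℝ) : ℂ)])
    (x : EuclideanSpace ℝ (Fin 2)) (hx : x ≠ 0) :
    (2 * Real.pi)⁻¹ • ∫ ξ : EuclideanSpace ℝ (Fin 2),
        Complex.exp (Complex.I * ((⟪ξ, x⟫ : ℝ) : ℂ)) • ψhat ξ
      = (1 / 2 : ℂ) • ∑ σ ∈ ({-1, 1} : Finset ℤ), ∑ m ∈ β.support,
          (Complex.I ^ (m + σ) * β m *
              Complex.exp (Complex.I * ((m + σ : ℤ) : ℂ) * ((polarAngle x : ℝ) : ℂ)) *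
              hankel h (m + σ) ‖x‖) •
            ![(-(σ : ℤ) : ℂ), Complex.I] :=
  stmt_11_general β h hmeas hint ψhat hψhat x
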